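/- Let X, Y be sets, Σ an index set with ξ* ∈ Σ, D_X : Σ → Set X, D_Y : Σ × X → Set Y, U : Y → ℝ, O : X → ℝ, c ∈ ℝ, with all suprema attained. Suppose (x₀, ξ*) maximizes π(x, ξ) = sup_{y ∈ D_Y(ξ,x)} U(y) − O(x) + c over { (x, ξ) : ξ ∈ Σ, x ∈ D_X(ξ) }, and suppose y₀ ∈ D_Y(ξ*, x₀) attains sup_{y ∈ D_Y(ξ*, x₀)} U(y). Then (x₀, y₀, ξ*) maximizes U^true(x, y) = U(y) − O(x) over { (x, y, ξ) : ξ ∈ Σ, x ∈ D_X(ξ), y ∈ D_Y(ξ, x) }. -/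
import Mathlib


/-- Converse alignment: if `(x₀, ξ*)` maximizes the profit `π` and `y₀` attains
the residual optimum, then `(x₀, y₀, ξ*)` maximizes the true market utility. -/
theorem stmt11 {X Y Sig : Type*} (DX : Sig → Set X) (DY : Sig → X → Set Y)
    (U : Y → ℝ) (O : X → ℝ) (c : ℝ)
    (π : X → Sig → ℝ)
    (hπ : ∀ x ξ, π x ξ = sSup (U '' DY ξ x) - O x + c)
    (hattain : ∀ ξ x, x ∈ DX ξ → ∃ y ∈ DY ξ x, ∀ y' ∈ DY ξ x, U y' ≤ U y)
    (ξstar : Sig) (x₀ : X) (y₀ : Y)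
    (hx₀ : x₀ ∈ DX ξstar) (hy₀ : y₀ ∈ DY ξstar x₀)
    (hy₀max : U y₀ = sSup (U '' DY ξstar x₀))
    (hπmax : ∀ ξ, ∀ x ∈ DX ξ, π x ξ ≤ π x₀ ξstar) :
    ∀ ξ, ∀ x ∈ DX ξ, ∀ y ∈ DY ξ x, U y - O x ≤ U y₀ - O x₀ := by
  intro ξ x hx y hy
  obtain ⟨ym, hym, hymax⟩ := hattain ξ x hx
  have hUy : U y ≤ sSup (U '' DY ξ x) := by
    apply le_csSup
    · exact ⟨U ym, by rintro _ ⟨y', hy', rfl⟩; exact hymax y' hy'⟩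
    · exact ⟨y, hy, rfl⟩
  have h := hπmax ξ x hx
  rw [hπ, hπ] at h
  rw [hy₀max]
  linarith
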